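/- arXiv:1803.01130 — 6 statements merged into one kernel-verified Lean document; each statement's English description precedes it below -/
import Mathlib

section
/- Assume (V3). Then for every t ≥ 0 and every x ∈ ℝ^N with x ≠ 0, one has N t^N [V(x) − V(tx)] + (t^N − 1)(∇V(x)·x) ≥ −((N−2)²θ/(4|x|²)) · (2 − N t^{N−2} + (N−2) t^N). -/
open MeasureTheory Filter Topology

noncomputable section

/-- `ℝ^N` as a Euclidean space. -/
abbrev Euc (N : ℕ) := EuclideanSpace ℝ (Fin N)

/-- `u` is admissible: continuously differentiable, `u ∈ L²` and `∇u ∈ L²`. -/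
def Admissible (N : ℕ) (u : Euc N → ℝ) : Prop :=
  ContDiff ℝ 1 u ∧ MemLp u 2 (volume : Measure (Euc N)) ∧
    MemLp (gradient u) 2 (volume : Measure (Euc N))

/-- The dilation `u_t(x) = u(x/t)`. -/
def dil (N : ℕ) (t : ℝ) (u : Euc N → ℝ) : Euc N → ℝ := fun x => u (t⁻¹ • x)

/-- `F(t) = ∫₀ᵗ f(s) ds`. -/
def Fprim (f : ℝ → ℝ) (t : ℝ) : ℝ := ∫ s in (0:ℝ)..t, f s

/-- `‖∇u‖₂²`. -/
def gradN2 (N : ℕ) (u : Euc N → ℝ) : ℝ := ∫ x : Euc N, ‖gradient u x‖ ^ 2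

/-- `‖u‖₂²`. -/
def l2N2 (N : ℕ) (u : Euc N → ℝ) : ℝ := ∫ x : Euc N, (u x) ^ 2

/-- `∇V(x)·x`, the radial derivative of `V` at `x`. -/
def dV (N : ℕ) (V : Euc N → ℝ) (x : Euc N) : ℝ := fderiv ℝ V x x

/-- The energy functional `I`. -/
def Ifun (N : ℕ) (V : Euc N → ℝ) (f : ℝ → ℝ) (u : Euc N → ℝ) : ℝ :=
  (1/2) * (∫ x : Euc N, (‖gradient u x‖ ^ 2 + V x * (u x) ^ 2)) -
    ∫ x : Euc N, Fprim f (u x)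

/-- The limit energy functional `I^∞`. -/
def IfunInf (N : ℕ) (Vinf : ℝ) (f : ℝ → ℝ) (u : Euc N → ℝ) : ℝ :=
  (1/2) * (∫ x : Euc N, (‖gradient u x‖ ^ 2 + Vinf * (u x) ^ 2)) -
    ∫ x : Euc N, Fprim f (u x)

/-- The Pohožaev functional `P`. -/
def Pfun (N : ℕ) (V : Euc N → ℝ) (f : ℝ → ℝ) (u : Euc N → ℝ) : ℝ :=
  ((N : ℝ) - 2) / 2 * gradN2 N u
    + (1/2) * (∫ x : Euc N, ((N : ℝ) * V x + dV N V x) * (u x) ^ 2)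
    - (N : ℝ) * ∫ x : Euc N, Fprim f (u x)

/-- The limit Pohožaev functional `P^∞`. -/
def PfunInf (N : ℕ) (Vinf : ℝ) (f : ℝ → ℝ) (u : Euc N → ℝ) : ℝ :=
  ((N : ℝ) - 2) / 2 * gradN2 N u + (N : ℝ) * Vinf / 2 * l2N2 N u
    - (N : ℝ) * ∫ x : Euc N, Fprim f (u x)

/-- The family of functionals `I_λ`. -/
def IfunL (N : ℕ) (V : Euc N → ℝ) (f : ℝ → ℝ) (lam : ℝ) (u : Euc N → ℝ) : ℝ :=
  (1/2) * (∫ x : Euc N, (‖gradient u x‖ ^ 2 + V x * (u x) ^ 2)) -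
    lam * ∫ x : Euc N, Fprim f (u x)

/-- The family of Pohožaev functionals `P_λ`. -/
def PfunL (N : ℕ) (V : Euc N → ℝ) (f : ℝ → ℝ) (lam : ℝ) (u : Euc N → ℝ) : ℝ :=
  ((N : ℝ) - 2) / 2 * gradN2 N u
    + (1/2) * (∫ x : Euc N, ((N : ℝ) * V x + dV N V x) * (u x) ^ 2)
    - (N : ℝ) * lam * ∫ x : Euc N, Fprim f (u x)

/-- The family of limit functionals `I_λ^∞`. -/
def IfunInfL (N : ℕ) (Vinf : ℝ) (f : ℝ → ℝ) (lam : ℝ) (u : Euc N → ℝ) : ℝ :=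
  (1/2) * (∫ x : Euc N, (‖gradient u x‖ ^ 2 + Vinf * (u x) ^ 2)) -
    lam * ∫ x : Euc N, Fprim f (u x)

/-- The family of limit Pohožaev functionals `P_λ^∞`. -/
def PfunInfL (N : ℕ) (Vinf : ℝ) (f : ℝ → ℝ) (lam : ℝ) (u : Euc N → ℝ) : ℝ :=
  ((N : ℝ) - 2) / 2 * gradN2 N u + (N : ℝ) * Vinf / 2 * l2N2 N u
    - (N : ℝ) * lam * ∫ x : Euc N, Fprim f (u x)

/-- (V1): `V` is continuous and nonnegative. -/
def V1cond (N : ℕ) (V : Euc N → ℝ) : Prop := Continuous V ∧ ∀ x, 0 ≤ V x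

/-- (V2): `V(y) → V_∞` as `|y| → ∞` and `V ≤ V_∞`. -/
def V2cond (N : ℕ) (V : Euc N → ℝ) (Vinf : ℝ) : Prop :=
  Tendsto V (cocompact (Euc N)) (𝓝 Vinf) ∧ ∀ x, V x ≤ Vinf

/-- (V3) with the parameter `θ ∈ [0,1)` made explicit. -/
def V3cond (N : ℕ) (V : Euc N → ℝ) (θ : ℝ) : Prop :=
  ContDiff ℝ 1 V ∧ 0 ≤ θ ∧ θ < 1 ∧
    ∀ x : Euc N, x ≠ 0 → ∀ t : ℝ, 0 < t →
      (1 ≤ t → 0 ≤ (N : ℝ) * (V x - V (t • x)) + (dV N V x - dV N V (t • x))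
        + ((N : ℝ) - 2) ^ 3 * θ / (4 * t ^ 2 * ‖x‖ ^ 2) * (t ^ 2 - 1)) ∧
      (t < 1 → (N : ℝ) * (V x - V (t • x)) + (dV N V x - dV N V (t • x))
        + ((N : ℝ) - 2) ^ 3 * θ / (4 * t ^ 2 * ‖x‖ ^ 2) * (t ^ 2 - 1) ≤ 0)

/-- (V4) with the parameter `θ ∈ [0,1)` made explicit. -/
def V4cond (N : ℕ) (V : Euc N → ℝ) (θ : ℝ) : Prop :=
  ContDiff ℝ 1 V ∧ 0 ≤ θ ∧ θ < 1 ∧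
    ∀ x : Euc N, x ≠ 0 → dV N V x ≤ ((N : ℝ) - 2) ^ 2 * θ / (2 * ‖x‖ ^ 2)

/-- (F1): continuity and subcritical growth `|f(t)| ≤ C₀(1 + |t|^{2^*-1})`. -/
def F1cond (N : ℕ) (f : ℝ → ℝ) : Prop :=
  Continuous f ∧ ∃ C₀ > (0:ℝ), ∀ t : ℝ,
    |f t| ≤ C₀ * (1 + |t| ^ (((N : ℝ) + 2) / ((N : ℝ) - 2)))

/-- (F2): `f(t) = o(t)` at `0` and `f(t) = o(|t|^{(N+2)/(N-2)})` at infinity. -/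
def F2cond (N : ℕ) (f : ℝ → ℝ) : Prop :=
  Tendsto (fun t => f t / t) (𝓝[≠] (0:ℝ)) (𝓝 0) ∧
    Tendsto (fun t : ℝ => f t / |t| ^ (((N : ℝ) + 2) / ((N : ℝ) - 2)))
      (cocompact ℝ) (𝓝 0)

/-- (F3): there exists `s₀` with `F(s₀) > (1/2)V_∞ s₀²`. -/
def F3cond (f : ℝ → ℝ) (Vinf : ℝ) : Prop :=
  ∃ s₀ : ℝ, (1/2) * Vinf * s₀ ^ 2 < Fprim f s₀

/-
Fix `x ≠ 0` and put `φ(s) = V(s • x)`, so that `∇V(s x)·(s x) = s φ'(s)`. The difference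
`h(t)` of the two sides vanishes at `t = 1`, and `h'(t) = N t^{N-1} g(t)`, where `g(t)` is the
quantity of (V3) at `x` and scale `t`. Hence `h` decreases on `[0, 1]` and increases on
`[1, ∞)`, so `h ≥ h(1) = 0`.
-/

open Set

theorem le_of_deriv_nonpos_of_deriv_nonneg {f f' : ℝ → ℝ} {a b t : ℝ} (hab : b ≤ a)
    (hbt : b ≤ t) (hcont : ContinuousOn f (Ici b)) (hf : ∀ s ∈ Ioi b, HasDerivAt f (f' s) s)
    (hleft : ∀ s ∈ Ioo b a, f' s ≤ 0) (hright : ∀ s ∈ Ioi a, 0 ≤ f' s) : f a ≤ f t := by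
  rcases le_total a t with hat | hta
  · refine monotoneOn_of_hasDerivWithinAt_nonneg (f' := f') (convex_Ici a)
      (hcont.mono (Ici_subset_Ici.2 hab)) (fun s hs => ?_) (fun s hs => ?_) self_mem_Ici hat hat
    · rw [interior_Ici] at hs ⊢
      exact (hf s (lt_of_le_of_lt hab hs)).hasDerivWithinAt
    · rw [interior_Ici] at hs
      exact hright s hs
  · refine antitoneOn_of_hasDerivWithinAt_nonpos (f' := f') (convex_Icc t a)
      (hcont.mono fun s hs => le_trans hbt hs.1) (fun s hs => ?_) (fun s hs => ?_)
      ⟨le_rfl, hta⟩ ⟨hta, le_rfl⟩ hta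
    · rw [interior_Icc] at hs ⊢
      exact (hf s (lt_of_le_of_lt hbt hs.1)).hasDerivWithinAt
    · rw [interior_Icc] at hs
      exact hleft s ⟨lt_of_le_of_lt hbt hs.1, hs.2⟩

theorem hasDerivAt_pohozaev_gap (m : ℕ) (c : ℝ) {φ φ' : ℝ → ℝ} {s : ℝ} (hs : s ≠ 0)
    (hφ : HasDerivAt φ (φ' s) s) :
    HasDerivAt (fun u => ((m : ℝ) + 3) * u ^ (m + 3) * (φ 1 - φ u) + (u ^ (m + 3) - 1) * φ' 1
        + c * (2 - ((m : ℝ) + 3) * u ^ (m + 1) + ((m : ℝ) + 1) * u ^ (m + 3)))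
      (((m : ℝ) + 3) * s ^ (m + 2) * (((m : ℝ) + 3) * (φ 1 - φ s) + (φ' 1 - s * φ' s)
        + ((m : ℝ) + 1) * c / s ^ 2 * (s ^ 2 - 1))) s := by
  have hpow : ∀ k : ℕ, HasDerivAt (fun u : ℝ => u ^ (k + 1)) (((k : ℝ) + 1) * s ^ k) s := by
    intro k
    simpa using hasDerivAt_pow (k + 1) s
  have h3 := hpow (m + 2)
  have h1 := hpow m
  push_cast at h3
  refine ((((h3.const_mul _).mul (hφ.const_sub _)).add ((h3.sub_const 1).mul_const _)).add
    ((((h1.const_mul _).const_sub 2).add (h3.const_mul _)).const_mul c)).congr_deriv ?_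
  field_simp
  ring

theorem pohozaev_ineq_of_deriv_sign (N : ℕ) (hN : 3 ≤ N) (c : ℝ) {φ φ' : ℝ → ℝ}
    (hφ : ∀ s, HasDerivAt φ (φ' s) s)
    (hge : ∀ s, 1 ≤ s →
      0 ≤ N * (φ 1 - φ s) + (φ' 1 - s * φ' s) + (N - 2) * c / s ^ 2 * (s ^ 2 - 1))
    (hle : ∀ s, 0 < s → s < 1 →
      N * (φ 1 - φ s) + (φ' 1 - s * φ' s) + (N - 2) * c / s ^ 2 * (s ^ 2 - 1) ≤ 0)
    {t : ℝ} (ht : 0 ≤ t) :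
    -c * (2 - N * t ^ (N - 2) + (N - 2) * t ^ N) ≤
      N * t ^ N * (φ 1 - φ t) + (t ^ N - 1) * φ' 1 := by
  obtain ⟨m, rfl⟩ := Nat.exists_eq_add_of_le' hN
  have hsub : ((m + 3 : ℕ) : ℝ) - 2 = (m : ℝ) + 1 := by push_cast; ring
  rw [hsub] at hge hle ⊢
  push_cast at hge hle ⊢
  have hcont : Continuous φ := continuous_iff_continuousAt.2 fun s => (hφ s).continuousAt
  have hmono := le_of_deriv_nonpos_of_deriv_nonneg zero_le_one ht (by fun_prop)
    (fun s hs => hasDerivAt_pohozaev_gap m c (ne_of_gt hs) (hφ s))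
    (fun s ⟨hs0, hs1⟩ => mul_nonpos_of_nonneg_of_nonpos (by positivity) (hle s hs0 hs1))
    (fun s (hs : 1 < s) => mul_nonneg (by positivity [zero_lt_one.trans hs]) (hge s hs.le))
  norm_num at hmono
  linarith

theorem HasFDerivAt.hasDerivAt_comp_smul_const {E F : Type*} [NormedAddCommGroup E]
    [NormedSpace ℝ E] [NormedAddCommGroup F] [NormedSpace ℝ F] {V : E → F} {V' : E →L[ℝ] F}
    {s : ℝ} {x : E} (hV : HasFDerivAt V V' (s • x)) :
    HasDerivAt (fun u : ℝ => V (u • x)) (V' x) s := by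
  simpa [Function.comp_def] using hV.comp_hasDerivAt s ((hasDerivAt_id s).smul_const x)

/-- (V3) implies the inequality (2.2). -/
theorem stmt_1 (N : ℕ) (hN : 3 ≤ N) (V : Euc N → ℝ) (θ : ℝ)
    (hV3 : V3cond N V θ) :
    ∀ t : ℝ, 0 ≤ t → ∀ x : Euc N, x ≠ 0 →
      (N : ℝ) * t ^ N * (V x - V (t • x)) + (t ^ N - 1) * dV N V x ≥
        -(((N : ℝ) - 2) ^ 2 * θ / (4 * ‖x‖ ^ 2)) *
          (2 - (N : ℝ) * t ^ (N - 2) + ((N : ℝ) - 2) * t ^ N) := by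
  obtain ⟨hV, -, -, hsign⟩ := hV3
  intro t ht x hx
  have hcoef : ∀ s : ℝ, ((N : ℝ) - 2) ^ 3 * θ / (4 * s ^ 2 * ‖x‖ ^ 2)
      = ((N : ℝ) - 2) * (((N : ℝ) - 2) ^ 2 * θ / (4 * ‖x‖ ^ 2)) / s ^ 2 := fun s => by ring
  have key := pohozaev_ineq_of_deriv_sign N hN (((N : ℝ) - 2) ^ 2 * θ / (4 * ‖x‖ ^ 2))
    (φ := fun s => V (s • x)) (φ' := fun s => fderiv ℝ V (s • x) x)
    (fun s => ((hV.differentiable one_ne_zero _).hasFDerivAt).hasDerivAt_comp_smul_const)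
    (fun s hs => by
      simpa only [one_smul, dV, map_smul, smul_eq_mul, hcoef] using
        (hsign x hx s (by linarith)).1 hs)
    (fun s hs0 hs1 => by
      simpa only [one_smul, dV, map_smul, smul_eq_mul, hcoef] using (hsign x hx s hs0).2 hs1)
    ht
  simpa only [one_smul, dV, ge_iff_le] using key
end
end

section
/- Let V_∞ ≥ 0 and let f : ℝ → ℝ be continuous. Then for every admissible u with F∘u integrable and every t > 0: I^∞(u) ≥ I^∞(u_t) + ((1 − t^N)/N)·P^∞(u) + ((2 − N t^{N−2} + (N−2)t^N)/(2N))·‖∇u‖₂². -/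
open MeasureTheory Filter Topology

noncomputable section

/-!
The inequality is in fact an identity. Under the dilation `u ↦ u_t`, the Dirichlet energy
`‖∇u‖₂²` scales by `t^(N-2)` while `‖u‖₂²` and `∫ F(u)` scale by `t^N`, so both sides are
affine in these three quantities, and their coefficients agree.
-/

theorem gradient_comp_const_smul {E : Type*} [NormedAddCommGroup E] [InnerProductSpace ℝ E]
    [CompleteSpace E] {u : E → ℝ} {c : ℝ} {x : E} (hu : DifferentiableAt ℝ u (c • x)) :
    gradient (fun y => u (c • y)) x = c • gradient u (c • x) := by
  have hcomp := hu.hasGradientAt.hasFDerivAt.comp x ((hasFDerivAt_id x).const_smul c)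
  refine (hasGradientAt_iff_hasFDerivAt.mpr (hcomp.congr_fderiv ?_)).gradient
  ext v
  simp

namespace Admissible

variable {N : ℕ} {u : Euc N → ℝ}

theorem integrable_sq_norm_gradient (hu : Admissible N u) :
    Integrable (fun x => ‖gradient u x‖ ^ 2) :=
  (memLp_two_iff_integrable_sq_norm hu.2.2.aestronglyMeasurable).mp hu.2.2

theorem integrable_sq (hu : Admissible N u) : Integrable (fun x => u x ^ 2) :=
  hu.2.1.integrable_sq

end Admissible

section Dilation

variable {N : ℕ} {t : ℝ}

theorem integral_dil (ht : 0 ≤ t) (g : Euc N → ℝ) :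
    ∫ x, dil N t g x = t ^ N * ∫ x, g x := by
  unfold dil
  rw [Measure.integral_comp_inv_smul_of_nonneg volume g ht, finrank_euclideanSpace_fin,
    smul_eq_mul]

theorem sq_norm_gradient_dil {u : Euc N → ℝ} (hu : Differentiable ℝ u) (x : Euc N) :
    ‖gradient (dil N t u) x‖ ^ 2 = t⁻¹ ^ 2 * dil N t (fun y => ‖gradient u y‖ ^ 2) x := by
  unfold dil
  rw [gradient_comp_const_smul (hu _), norm_smul, mul_pow, Real.norm_eq_abs, sq_abs]

theorem gradN2_dil (hN : 2 ≤ N) (ht : 0 < t) {u : Euc N → ℝ} (hu : Differentiable ℝ u) :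
    gradN2 N (dil N t u) = t ^ (N - 2) * gradN2 N u := by
  have hpow : t ^ N = t ^ (N - 2) * t ^ 2 := by rw [← pow_add, Nat.sub_add_cancel hN]
  simp only [gradN2, sq_norm_gradient_dil hu, integral_const_mul, integral_dil ht.le, hpow]
  field_simp

theorem l2N2_dil (ht : 0 ≤ t) (u : Euc N → ℝ) : l2N2 N (dil N t u) = t ^ N * l2N2 N u :=
  integral_dil ht (fun x => u x ^ 2)

theorem integrable_dil {g : Euc N → ℝ} (hg : Integrable g) (ht : t ≠ 0) :
    Integrable (dil N t g) :=
  hg.comp_smul (inv_ne_zero ht)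

end Dilation

theorem IfunInf_eq {N : ℕ} (Vinf : ℝ) (f : ℝ → ℝ) {u : Euc N → ℝ}
    (hG : Integrable (fun x => ‖gradient u x‖ ^ 2)) (hL : Integrable (fun x => u x ^ 2)) :
    IfunInf N Vinf f u = 1 / 2 * (gradN2 N u + Vinf * l2N2 N u) - ∫ x, Fprim f (u x) := by
  rw [IfunInf, integral_add hG (hL.const_mul Vinf), integral_const_mul, gradN2, l2N2]

theorem IfunInf_dil {N : ℕ} (hN : 2 ≤ N) (Vinf : ℝ) (f : ℝ → ℝ) {u : Euc N → ℝ}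
    (hu : Admissible N u) {t : ℝ} (ht : 0 < t) :
    IfunInf N Vinf f (dil N t u) = 1 / 2 * (t ^ (N - 2) * gradN2 N u + Vinf * (t ^ N * l2N2 N u))
      - t ^ N * ∫ x, Fprim f (u x) := by
  have hdiff : Differentiable ℝ u := hu.1.differentiable one_ne_zero
  have hG : Integrable (fun x => ‖gradient (dil N t u) x‖ ^ 2) := by
    simp only [sq_norm_gradient_dil hdiff]
    exact (integrable_dil hu.integrable_sq_norm_gradient ht.ne').const_mul _
  rw [IfunInf_eq Vinf f hG (integrable_dil hu.integrable_sq ht.ne'), gradN2_dil hN ht hdiff,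
    l2N2_dil ht.le, ← integral_dil ht.le (fun x => Fprim f (u x))]
  rfl

theorem stmt_4_general (N : ℕ) (hN : 3 ≤ N) (Vinf : ℝ)
    (f : ℝ → ℝ)
    (u : Euc N → ℝ) (hu : Admissible N u)
    (t : ℝ) (ht : 0 < t) :
    IfunInf N Vinf f u ≥
      IfunInf N Vinf f (dil N t u) + (1 - t ^ N) / (N : ℝ) * PfunInf N Vinf f u
        + (2 - (N : ℝ) * t ^ (N - 2) + ((N : ℝ) - 2) * t ^ N) / (2 * (N : ℝ)) *
            gradN2 N u := by
  have hN0 : (N : ℝ) ≠ 0 := by positivity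
  rw [IfunInf_eq Vinf f hu.integrable_sq_norm_gradient hu.integrable_sq,
    IfunInf_dil (by omega) Vinf f hu ht, PfunInf]
  refine ge_of_eq ?_
  field_simp
  ring

/-- the IIP inequality (2.6) for the autonomous functional `I^∞`. -/
theorem stmt_4 (N : ℕ) (hN : 3 ≤ N) (Vinf : ℝ) (hVinf : 0 ≤ Vinf)
    (f : ℝ → ℝ) (hf : Continuous f)
    (u : Euc N → ℝ) (hu : Admissible N u)
    (hF : Integrable (fun x : Euc N => Fprim f (u x)))
    (t : ℝ) (ht : 0 < t) :
    IfunInf N Vinf f u ≥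
      IfunInf N Vinf f (dil N t u) + (1 - t ^ N) / (N : ℝ) * PfunInf N Vinf f u
        + (2 - (N : ℝ) * t ^ (N - 2) + ((N : ℝ) - 2) * t ^ N) / (2 * (N : ℝ)) *
            gradN2 N u :=
  stmt_4_general N hN Vinf f u hu t ht
end
end

section
/- Let N ≥ 3 be an integer, V_∞ ≥ 0, f : ℝ → ℝ continuous with F(t) = ∫₀^t f(s) ds, and suppose there exists s₀ ∈ ℝ with F(s₀) > (1/2)V_∞ s₀² (condition (F3)). Then there exists a Lipschitz continuous, compactly supported function u : ℝ^N → ℝ, not identically zero, such that ∫_{ℝ^N}[F(u(x)) − (1/2)V_∞ u(x)²] dx > 0; in particular the set Λ is nonempty. -/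
/-
Put `G(t) = F(t) - ½V_∞t²`, so that `G` is continuous, `G(0) = 0` and `G(s₀) > 0`. Take `u` equal to
`s₀` on the unit ball, `0` outside the ball of radius `1 + δ`, and radially affine in between. Then
`∫ G(u) ≥ G(s₀)|B₁| - M((1 + δ)ᴺ - 1)|B₁|`, where `M` bounds `|G|` on `[-|s₀|, |s₀|]`, and this is
positive once `δ` is small.
-/

open MeasureTheory Filter Topology

noncomputable section

open Metric Module

theorem continuous_Fprim {f : ℝ → ℝ} (hf : Continuous f) : Continuous (Fprim f) :=
  intervalIntegral.continuous_primitive (fun _ _ => hf.intervalIntegrable _ _) 0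

section Plateau

variable {E : Type*} [NormedAddCommGroup E]

def plateau (δ s : ℝ) (x : E) : ℝ := s * min (δ⁻¹ * max (1 + δ - ‖x‖) 0) 1

theorem lipschitzWith_plateau (δ s : ℝ) :
    LipschitzWith (‖s‖₊ * ‖δ‖₊⁻¹) (plateau δ s : E → ℝ) := by
  unfold plateau
  simpa [Function.comp_def] using (lipschitzWith_smul s).comp (((lipschitzWith_smul δ⁻¹).comp
    (((LipschitzWith.const (1 + δ)).sub lipschitzWith_one_norm).max_const 0)).min_const 1)

theorem plateau_eq_of_norm_lt_one {δ : ℝ} (hδ : 0 < δ) (s : ℝ) {x : E} (hx : ‖x‖ < 1) :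
    plateau δ s x = s := by
  have h : 1 ≤ δ⁻¹ * max (1 + δ - ‖x‖) 0 := by
    rw [max_eq_left (by linarith), ← div_eq_inv_mul, one_le_div hδ]
    linarith
  simp [plateau, min_eq_right h]

theorem plateau_eq_zero_of_lt_norm (δ s : ℝ) {x : E} (hx : 1 + δ < ‖x‖) : plateau δ s x = 0 := by
  simp [plateau, max_eq_right (by linarith : 1 + δ - ‖x‖ ≤ 0)]

theorem abs_plateau_le {δ : ℝ} (hδ : 0 ≤ δ) (s : ℝ) (x : E) : |plateau δ s x| ≤ |s| := by
  have h₀ : 0 ≤ min (δ⁻¹ * max (1 + δ - ‖x‖) 0) 1 :=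
    le_min (mul_nonneg (inv_nonneg.2 hδ) (le_max_right _ _)) zero_le_one
  rw [plateau, abs_mul, abs_of_nonneg h₀]
  exact mul_le_of_le_one_right (abs_nonneg s) (min_le_right _ _)

theorem hasCompactSupport_plateau [ProperSpace E] (δ s : ℝ) :
    HasCompactSupport (plateau δ s : E → ℝ) :=
  HasCompactSupport.intro (isCompact_closedBall 0 (1 + δ)) fun x hx =>
    plateau_eq_zero_of_lt_norm δ s (by simpa using hx)

end Plateau

section AddHaar

variable {E : Type*} [NormedAddCommGroup E] [NormedSpace ℝ E] [FiniteDimensional ℝ E]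
  [MeasurableSpace E] [BorelSpace E] (μ : Measure E) [μ.IsAddHaarMeasure]

theorem integral_ge_of_eqOn_unitBall {g : E → ℝ} (hg : Integrable g μ) {c M δ : ℝ} (hδ : 0 ≤ δ)
    (h_in : ∀ x, ‖x‖ < 1 → g x = c) (h_out : ∀ x, 1 + δ < ‖x‖ → g x = 0)
    (h_bd : ∀ x, |g x| ≤ M) :
    (c - M * ((1 + δ) ^ finrank ℝ E - 1)) * μ.real (ball 0 1) ≤ ∫ x, g x ∂μ := by
  have hsub : ball (0 : E) 1 ⊆ closedBall 0 (1 + δ) :=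
    ball_subset_closedBall.trans (closedBall_subset_closedBall (by linarith))
  have h_annulus : μ.real (closedBall 0 (1 + δ) \ ball 0 1) =
      ((1 + δ) ^ finrank ℝ E - 1) * μ.real (ball 0 1) := by
    rw [measureReal_sdiff hsub measurableSet_ball measure_closedBall_lt_top.ne,
      Measure.addHaar_real_closedBall μ 0 (by linarith)]
    ring
  have h_split : ∫ x, g x ∂μ =
      (∫ x in ball 0 1, g x ∂μ) + ∫ x in closedBall 0 (1 + δ) \ ball 0 1, g x ∂μ := by
    rw [← setIntegral_eq_integral_of_forall_compl_eq_zero (s := closedBall 0 (1 + δ))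
      fun x hx => h_out x (by simpa using hx), ← setIntegral_union disjoint_sdiff_self_right
      (measurableSet_closedBall.diff measurableSet_ball) hg.integrableOn hg.integrableOn,
      Set.union_sdiff_cancel hsub]
  have h_ball : ∫ x in ball 0 1, g x ∂μ = c * μ.real (ball 0 1) := by
    rw [setIntegral_congr_fun measurableSet_ball fun x hx => h_in x (by simpa using hx),
      setIntegral_const, smul_eq_mul, mul_comm]
  have h_rest : ‖∫ x in closedBall 0 (1 + δ) \ ball 0 1, g x ∂μ‖ ≤
      M * μ.real (closedBall 0 (1 + δ) \ ball 0 1) :=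
    norm_setIntegral_le_of_norm_le_const
      ((measure_mono Set.sdiff_subset).trans_lt measure_closedBall_lt_top) fun x _ => h_bd x
  rw [h_annulus, Real.norm_eq_abs] at h_rest
  rw [h_split, h_ball]
  nlinarith [neg_abs_le (∫ x in closedBall 0 (1 + δ) \ ball 0 1, g x ∂μ)]

theorem exists_lipschitz_hasCompactSupport_integral_comp_pos {G : ℝ → ℝ} (hG : Continuous G)
    (hG0 : G 0 = 0) {s : ℝ} (hs : 0 < G s) :
    ∃ u : E → ℝ, (∃ K, LipschitzWith K u) ∧ HasCompactSupport u ∧ u ≠ 0 ∧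
      0 < ∫ x, G (u x) ∂μ := by
  obtain ⟨M, hM⟩ := (isCompact_closedBall (0 : ℝ) |s|).exists_bound_of_continuousOn
    hG.continuousOn
  have h_small : ∀ᶠ δ in 𝓝[>] (0 : ℝ), 0 < δ ∧ M * ((1 + δ) ^ finrank ℝ E - 1) < G s := by
    refine eventually_mem_nhdsWithin.and (nhdsWithin_le_nhds ?_)
    have h_cont : ContinuousAt (fun δ : ℝ => M * ((1 + δ) ^ finrank ℝ E - 1)) 0 := by fun_prop
    exact h_cont.eventually_lt continuousAt_const (by simpa using hs)
  obtain ⟨δ, hδ, hδM⟩ := h_small.exists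
  have hu_cont : Continuous (plateau δ s : E → ℝ) := (lipschitzWith_plateau δ s).continuous
  have h_int : Integrable (fun x => G (plateau δ s x)) μ :=
    (hG.comp hu_cont).integrable_of_hasCompactSupport
      ((hasCompactSupport_plateau δ s).comp_left hG0)
  refine ⟨plateau δ s, ⟨_, lipschitzWith_plateau δ s⟩, hasCompactSupport_plateau δ s, ?_, ?_⟩
  · intro h
    have h₀ := congrFun h 0
    rw [plateau_eq_of_norm_lt_one hδ s (by simp), Pi.zero_apply] at h₀
    exact hs.ne' (by rw [h₀, hG0])
  · have h_vol : 0 < μ.real (ball (0 : E) 1) :=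
      ENNReal.toReal_pos (measure_ball_pos μ 0 one_pos).ne' measure_ball_lt_top.ne
    calc 0 < (G s - M * ((1 + δ) ^ finrank ℝ E - 1)) * μ.real (ball 0 1) :=
          mul_pos (by linarith) h_vol
      _ ≤ _ := integral_ge_of_eqOn_unitBall μ h_int hδ.le
          (fun x hx => by rw [plateau_eq_of_norm_lt_one hδ s hx])
          (fun x hx => by rw [plateau_eq_zero_of_lt_norm δ s hx, hG0])
          (fun x => by simpa using hM _ (by simpa using abs_plateau_le hδ.le s x))

end AddHaar

theorem stmt_9_general (N : ℕ) (Vinf : ℝ)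
    (f : ℝ → ℝ) (hf : Continuous f)
    (hF3 : F3cond f Vinf) :
    ∃ u : Euc N → ℝ, (∃ K : NNReal, LipschitzWith K u) ∧ HasCompactSupport u ∧
      u ≠ 0 ∧
      0 < ∫ x : Euc N, (Fprim f (u x) - (1/2) * Vinf * (u x) ^ 2) := by
  obtain ⟨s₀, hs₀⟩ := hF3
  exact exists_lipschitz_hasCompactSupport_integral_comp_pos volume
    (G := fun t => Fprim f t - (1/2) * Vinf * t ^ 2) ((continuous_Fprim hf).sub (by fun_prop))
    (by simp [Fprim]) (s := s₀) (by linarith)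

/-- under (F3), there is a nonzero Lipschitz compactly supported
function `u` with `∫ [F(u) - (1/2) V_∞ u²] > 0`; in particular `Λ ≠ ∅`. -/
theorem stmt_9 (N : ℕ) (hN : 3 ≤ N) (Vinf : ℝ) (hVinf : 0 ≤ Vinf)
    (f : ℝ → ℝ) (hf : Continuous f)
    (hF3 : F3cond f Vinf) :
    ∃ u : Euc N → ℝ, (∃ K : NNReal, LipschitzWith K u) ∧ HasCompactSupport u ∧
      u ≠ 0 ∧
      0 < ∫ x : Euc N, (Fprim f (u x) - (1/2) * Vinf * (u x) ^ 2) :=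
  stmt_9_general N Vinf f hf hF3
end
end

section
/- Let V_∞ ≥ 0 and let f : ℝ → ℝ be continuous. Then for every λ ≥ 0, every admissible u with F∘u integrable, and every t > 0: I_λ^∞(u) ≥ I_λ^∞(u_t) + ((1 − t^N)/N)·P_λ^∞(u) + ((2 − N t^{N−2} + (N−2)t^N)/(2N))·‖∇u‖₂². -/
open MeasureTheory Filter Topology

noncomputable section

/-! Under `x ↦ x / t` the Dirichlet energy scales by `t ^ (N - 2)` and the `L²` and `F` terms by
`t ^ N`, so `I_λ^∞(u_t)` is an explicit combination of `‖∇u‖₂²`, `‖u‖₂²` and `∫ F(u)`; the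
inequality then holds with equality, as an algebraic identity in these three quantities. -/

theorem gradient_comp_smul {E : Type*} [NormedAddCommGroup E] [InnerProductSpace ℝ E]
    [CompleteSpace E] (u : E → ℝ) (c : ℝ) (x : E) :
    gradient (fun y => u (c • y)) x = c • gradient u (c • x) := by
  rw [gradient, fderiv_comp_smul, map_smul, gradient]

section Dilation

variable {N : ℕ} {Vinf : ℝ} {f : ℝ → ℝ} {lam : ℝ} {u : Euc N → ℝ} {t : ℝ}

theorem integral_comp_inv_smul_euc (g : Euc N → ℝ) (ht : 0 ≤ t) :
    ∫ x : Euc N, g (t⁻¹ • x) = t ^ N * ∫ x : Euc N, g x := by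
  rw [Measure.integral_comp_inv_smul_of_nonneg volume g ht, finrank_euclideanSpace_fin,
    smul_eq_mul]

theorem gradient_dil (x : Euc N) :
    gradient (dil N t u) x = t⁻¹ • gradient u (t⁻¹ • x) :=
  gradient_comp_smul u t⁻¹ x

theorem IfunInfL_eq (hL2 : MemLp u 2) (hG2 : MemLp (gradient u) 2) :
    IfunInfL N Vinf f lam u =
      gradN2 N u / 2 + Vinf / 2 * l2N2 N u - lam * ∫ x : Euc N, Fprim f (u x) := by
  rw [IfunInfL, integral_add hG2.norm.integrable_sq (hL2.integrable_sq.const_mul Vinf),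
    integral_const_mul, gradN2, l2N2]
  ring

theorem IfunInfL_dil (hL2 : MemLp u 2) (hG2 : MemLp (gradient u) 2) (ht : 0 ≤ t) :
    IfunInfL N Vinf f lam (dil N t u) =
      t ^ N * (gradN2 N u / (2 * t ^ 2) + Vinf / 2 * l2N2 N u
        - lam * ∫ x : Euc N, Fprim f (u x)) := by
  simp only [IfunInfL, gradient_dil, dil, norm_smul, mul_pow, Real.norm_eq_abs, sq_abs]
  rw [integral_comp_inv_smul_euc (fun y => t⁻¹ ^ 2 * ‖gradient u y‖ ^ 2 + Vinf * u y ^ 2) ht,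
    integral_comp_inv_smul_euc (fun y => Fprim f (u y)) ht,
    integral_add (hG2.norm.integrable_sq.const_mul _) (hL2.integrable_sq.const_mul Vinf),
    integral_const_mul, integral_const_mul, gradN2, l2N2]
  field_simp

end Dilation

theorem stmt_15_general (N : ℕ) (hN : 3 ≤ N) (Vinf : ℝ)
    (f : ℝ → ℝ) :
    ∀ lam : ℝ, 0 ≤ lam → ∀ u : Euc N → ℝ, Admissible N u →
      Integrable (fun x : Euc N => Fprim f (u x)) →
      ∀ t : ℝ, 0 < t →
      IfunInfL N Vinf f lam u ≥
        IfunInfL N Vinf f lam (dil N t u)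
          + (1 - t ^ N) / (N : ℝ) * PfunInfL N Vinf f lam u
          + (2 - (N : ℝ) * t ^ (N - 2) + ((N : ℝ) - 2) * t ^ N) / (2 * (N : ℝ)) *
              gradN2 N u := by
  rintro lam - u ⟨-, hL2, hG2⟩ - t ht
  have hpow : t ^ N = t ^ (N - 2) * t ^ 2 := by rw [← pow_add, Nat.sub_add_cancel (by omega)]
  have hN0 : (N : ℝ) ≠ 0 := by positivity
  refine le_of_eq ?_
  rw [IfunInfL_eq hL2 hG2, IfunInfL_dil hL2 hG2 ht.le, PfunInfL, hpow]
  field_simp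
  ring

/-- the IIP inequality (4.3) for the family `I_λ^∞`, `λ ≥ 0`. -/
theorem stmt_15 (N : ℕ) (hN : 3 ≤ N) (Vinf : ℝ) (hVinf : 0 ≤ Vinf)
    (f : ℝ → ℝ) (hf : Continuous f) :
    ∀ lam : ℝ, 0 ≤ lam → ∀ u : Euc N → ℝ, Admissible N u →
      Integrable (fun x : Euc N => Fprim f (u x)) →
      ∀ t : ℝ, 0 < t →
      IfunInfL N Vinf f lam u ≥
        IfunInfL N Vinf f lam (dil N t u)
          + (1 - t ^ N) / (N : ℝ) * PfunInfL N Vinf f lam u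
          + (2 - (N : ℝ) * t ^ (N - 2) + ((N : ℝ) - 2) * t ^ N) / (2 * (N : ℝ)) *
              gradN2 N u :=
  stmt_15_general N hN Vinf f
end
end

section
/- Let N ≥ 3 be an integer, a > 0, b > 0, α ≥ 2, and define V : ℝ^N → ℝ by V(x) = a − b/(1 + |x|^α). If either α = 2 and 4b < (N−2)², or α > 2 and ((α−2)^{(α−2)/α}(α+2)^{(α+2)/α}/(2α))·b < (N−2)², then V satisfies (V4): there exists θ ∈ [0,1) such that ∇V(x)·x ≤ (N−2)²θ/(2|x|²) for all x ∈ ℝ^N \ {0}. -/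
open MeasureTheory Filter Topology

noncomputable section

/-!
With `r = ‖x‖`, `∇V(x)·x = b α r^α / (1 + r^α)²`, so (V4) asks for a bound on
`2 α b r^(α+2) / (1 + r^α)²` uniform in `r`. Weighted AM–GM applied to
`1 + r^α = w₁ · (1 / w₁) + w₂ · (r^α / w₂)` with weights `w₁, w₂ = (α ∓ 2) / (2α)` gives
`r^((α+2)/2) ≤ w₁^w₁ w₂^w₂ (1 + r^α)`, whose square is the sharp bound `radialConst α · b`.
The smallness assumption on `b` is then exactly `θ = radialConst α · b / (N - 2)² < 1`.
-/

open Real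

theorem rpow_self_pos {w : ℝ} (hw : 0 ≤ w) : 0 < w ^ w := by
  rcases hw.eq_or_lt with rfl | hw
  · simp
  · positivity

theorem rpow_mul_rpow_le_mul_add {w₁ w₂ x y : ℝ} (hw₁ : 0 ≤ w₁) (hw₂ : 0 ≤ w₂)
    (hw : w₁ + w₂ = 1) (hx : 0 ≤ x) (hy : 0 ≤ y) :
    x ^ w₁ * y ^ w₂ ≤ w₁ ^ w₁ * w₂ ^ w₂ * (x + y) := by
  have mul_div_le {w z : ℝ} (hz : 0 ≤ z) : w * (z / w) ≤ z := by
    rcases eq_or_ne w 0 with rfl | hw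
    · simpa using hz
    · rw [mul_div_cancel₀ _ hw]
  have amgm := geom_mean_le_arith_mean2_weighted hw₁ hw₂ (div_nonneg hx hw₁)
    (div_nonneg hy hw₂) hw
  rw [div_rpow hx hw₁, div_rpow hy hw₂, div_mul_div_comm,
    div_le_iff₀ (mul_pos (rpow_self_pos hw₁) (rpow_self_pos hw₂))] at amgm
  calc x ^ w₁ * y ^ w₂ ≤ (w₁ * (x / w₁) + w₂ * (y / w₂)) * (w₁ ^ w₁ * w₂ ^ w₂) := amgm
    _ ≤ (x + y) * (w₁ ^ w₁ * w₂ ^ w₂) := by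
        gcongr
        exacts [mul_div_le hx, mul_div_le hy]
    _ = _ := mul_comm _ _

/-- The supremum of `2 α r^(α+2) / (1 + r^α)²` over `r ≥ 0`. At `α = 2` it equals `4`, because
`Real.rpow` gives `0 ^ 0 = 1`. -/
noncomputable def radialConst (α : ℝ) : ℝ :=
  (α - 2) ^ ((α - 2) / α) * (α + 2) ^ ((α + 2) / α) / (2 * α)

theorem radialConst_two : radialConst 2 = 4 := by
  norm_num [radialConst]

theorem radialConst_nonneg {α : ℝ} (hα : 2 ≤ α) : 0 ≤ radialConst α := by
  unfold radialConst
  have := rpow_nonneg (sub_nonneg.2 hα) ((α - 2) / α)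
  positivity

theorem sq_weight_rpow_weight_eq {α : ℝ} (hα : 2 ≤ α) :
    (((α - 2) / (2 * α)) ^ ((α - 2) / (2 * α)) * ((α + 2) / (2 * α)) ^ ((α + 2) / (2 * α))) ^ 2
      = radialConst α / (2 * α) := by
  have h2α : 0 < 2 * α := by linarith
  rw [mul_pow, ← rpow_mul_natCast (div_nonneg (by linarith) h2α.le),
    ← rpow_mul_natCast (div_nonneg (by linarith) h2α.le),
    div_rpow (by linarith) h2α.le, div_rpow (by linarith) h2α.le, div_mul_div_comm,
    ← rpow_add h2α]
  have e₁ : (α - 2) / (2 * α) * (2 : ℕ) = (α - 2) / α := by field_simp; ring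
  have e₂ : (α + 2) / (2 * α) * (2 : ℕ) = (α + 2) / α := by field_simp; ring
  have e₃ : (α - 2) / α + (α + 2) / α = (2 : ℕ) := by field_simp; ring
  rw [e₁, e₂, e₃, rpow_natCast, radialConst]
  field_simp

theorem two_mul_rpow_add_two_le {α r : ℝ} (hα : 2 ≤ α) (hr : 0 ≤ r) :
    2 * α * r ^ (α + 2) ≤ radialConst α * (1 + r ^ α) ^ 2 := by
  have h2α : 0 < 2 * α := by linarith
  have amgm := rpow_mul_rpow_le_mul_add (w₂ := (α + 2) / (2 * α)) (x := 1) (y := r ^ α)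
    (div_nonneg (sub_nonneg.2 hα) h2α.le) (div_nonneg (by linarith) h2α.le)
    (by field_simp; ring) zero_le_one (by positivity)
  rw [one_rpow, one_mul, ← rpow_mul hr] at amgm
  have sq := pow_le_pow_left₀ (by positivity) amgm 2
  rw [mul_pow, sq_weight_rpow_weight_eq hα, ← rpow_mul_natCast hr,
    show α * ((α + 2) / (2 * α)) * (2 : ℕ) = α + 2 by field_simp; ring] at sq
  calc 2 * α * r ^ (α + 2) ≤ 2 * α * (radialConst α / (2 * α) * (1 + r ^ α) ^ 2) := by gcongr
    _ = radialConst α * (1 + r ^ α) ^ 2 := by field_simp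

section InnerProductSpace

variable {E : Type*} [NormedAddCommGroup E] [InnerProductSpace ℝ E]

theorem contDiff_sub_div_one_add_norm_rpow (a b : ℝ) {α : ℝ} (hα : 1 < α) :
    ContDiff ℝ 1 (fun x : E => a - b / (1 + ‖x‖ ^ α)) :=
  contDiff_const.sub <| contDiff_const.div (contDiff_const.add (contDiff_norm_rpow hα))
    fun x => by positivity

theorem fderiv_sub_div_one_add_norm_rpow_apply_self (a b : ℝ) {α : ℝ} (hα : 1 < α) (x : E) :
    fderiv ℝ (fun x : E => a - b / (1 + ‖x‖ ^ α)) x x = b * α * ‖x‖ ^ α / (1 + ‖x‖ ^ α) ^ 2 := by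
  have hden : 1 + ‖x‖ ^ α ≠ 0 := by positivity
  have hg : HasDerivAt (fun t : ℝ => a - b / (1 + t)) (b / (1 + ‖x‖ ^ α) ^ 2) (‖x‖ ^ α) := by
    have hd : HasDerivAt (fun t : ℝ => 1 + t) 1 (‖x‖ ^ α) := (hasDerivAt_id _).const_add 1
    exact (((hasDerivAt_const _ b).fun_div hd hden).const_sub a).congr_deriv (by ring)
  have hV : HasFDerivAt (fun x : E => a - b / (1 + ‖x‖ ^ α))
      ((b / (1 + ‖x‖ ^ α) ^ 2) • (α * ‖x‖ ^ (α - 2)) • innerSL ℝ x) x :=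
    hg.comp_hasFDerivAt (f := fun x : E => ‖x‖ ^ α) x (hasFDerivAt_norm_rpow x hα)
  have hpow : ‖x‖ ^ (α - 2) * ‖x‖ ^ 2 = ‖x‖ ^ α := by
    rw [← rpow_natCast, ← rpow_add' (norm_nonneg x) (by simp; linarith)]
    norm_num
  rw [hV.fderiv]
  simp only [FunLike.coe_smul, Pi.smul_apply, innerSL_apply_apply,
    real_inner_self_eq_norm_sq, smul_eq_mul]
  rw [mul_assoc α, hpow]
  ring

theorem fderiv_sub_div_one_add_norm_rpow_apply_self_le (a : ℝ) {b α : ℝ} (hb : 0 ≤ b)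
    (hα : 2 ≤ α) {x : E} (hx : x ≠ 0) :
    fderiv ℝ (fun x : E => a - b / (1 + ‖x‖ ^ α)) x x ≤ radialConst α * b / (2 * ‖x‖ ^ 2) := by
  have hr : 0 < ‖x‖ := norm_pos_iff.2 hx
  rw [fderiv_sub_div_one_add_norm_rpow_apply_self a b (by linarith) x,
    div_le_div_iff₀ (by positivity) (by positivity)]
  have key := mul_le_mul_of_nonneg_left (two_mul_rpow_add_two_le hα hr.le) hb
  rw [rpow_add hr, rpow_two] at key
  linarith

end InnerProductSpace

theorem stmt_16_general (N : ℕ) (hN : 3 ≤ N) (a b α : ℝ)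
    (hb : 0 < b) (hα : 2 ≤ α)
    (V : Euc N → ℝ) (hV : ∀ x : Euc N, V x = a - b / (1 + ‖x‖ ^ α))
    (hcase : (α = 2 ∧ 4 * b < ((N : ℝ) - 2) ^ 2) ∨
      (2 < α ∧ (α - 2) ^ ((α - 2) / α) * (α + 2) ^ ((α + 2) / α) / (2 * α) * b <
        ((N : ℝ) - 2) ^ 2)) :
    ∃ θ : ℝ, V4cond N V θ := by
  obtain rfl : V = fun x => a - b / (1 + ‖x‖ ^ α) := funext hV
  have hN2 : 0 < (N : ℝ) - 2 := by
    have : (3 : ℝ) ≤ N := by exact_mod_cast hN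
    linarith
  have hsmall : radialConst α * b < ((N : ℝ) - 2) ^ 2 := by
    rcases hcase with ⟨rfl, h⟩ | ⟨-, h⟩
    · rwa [radialConst_two]
    · exact h
  refine ⟨radialConst α * b / ((N : ℝ) - 2) ^ 2,
    contDiff_sub_div_one_add_norm_rpow a b (by linarith),
    div_nonneg (mul_nonneg (radialConst_nonneg hα) hb.le) (by positivity),
    (div_lt_one (by positivity)).2 hsmall,
    fun x hx => ?_⟩
  calc dV N _ x ≤ radialConst α * b / (2 * ‖x‖ ^ 2) :=
        fderiv_sub_div_one_add_norm_rpow_apply_self_le a hb.le hα hx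
    _ = _ := by field_simp

/-- the potential `V(x) = a - b/(1 + |x|^α)` satisfies (V4) under
the stated smallness conditions on `b`. -/
theorem stmt_16 (N : ℕ) (hN : 3 ≤ N) (a b α : ℝ)
    (ha : 0 < a) (hb : 0 < b) (hα : 2 ≤ α)
    (V : Euc N → ℝ) (hV : ∀ x : Euc N, V x = a - b / (1 + ‖x‖ ^ α))
    (hcase : (α = 2 ∧ 4 * b < ((N : ℝ) - 2) ^ 2) ∨
      (2 < α ∧ (α - 2) ^ ((α - 2) / α) * (α + 2) ^ ((α + 2) / α) / (2 * α) * b <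
        ((N : ℝ) - 2) ^ 2)) :
    ∃ θ : ℝ, V4cond N V θ :=
  stmt_16_general N hN a b α hb hα V hV hcase
end
end

section
/- Assume (V4). Then for every admissible u such that x ↦ (∇V(x)·x)u(x)² is integrable, (1/N)‖∇u‖₂² − (1/(2N))∫_{ℝ^N}(∇V(x)·x)u² dx ≥ ((1−θ)/N)‖∇u‖₂². In particular, for any continuous f and λ ∈ ℝ, every admissible u with P_λ(u) = 0 (and F∘u, V u², (∇V(x)·x)u² integrable) satisfies I_λ(u) ≥ ((1−θ)/N)‖∇u‖₂² ≥ 0. -/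
open MeasureTheory Filter Topology

noncomputable section

open Set Metric
open scoped ENNReal

/-! Along each ray `v(r) = u(r ω)`, `|ω| = 1`, completing the square in `(v² r^(N-2))'` gives
`∫₀^b v² r^(N-3) ≤ 2/(N-2) v(b)² b^(N-2) + 4/(N-2)² ∫₀^b v'² r^(N-1)`; since `v² r^(N-1)` is
integrable, the boundary term is small along a sequence `b → ∞`. Integrating over the sphere in
polar coordinates yields Hardy's inequality `∫ u²/|x|² ≤ 4/(N-2)² ‖∇u‖₂²`, so (V4) gives
`∫ (∇V·x) u² ≤ (N-2)²θ/2 ∫ u²/|x|² ≤ 2θ ‖∇u‖₂²`, which is the first claim. Eliminating `∫ F(u)`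
between `I_λ` and `P_λ(u) = 0` gives `I_λ(u) = (1/N)‖∇u‖₂² - (1/(2N)) ∫ (∇V·x) u²`. -/

theorem frequently_atTop_le_of_setLIntegral_Ioi_lt_top {f : ℝ → ℝ} {a ε : ℝ} (hε : 0 < ε)
    (hf : ∫⁻ r in Ioi a, ENNReal.ofReal (f r) < ∞) : ∃ᶠ r in atTop, f r ≤ ε := by
  intro hev
  obtain ⟨R, hR⟩ := eventually_atTop.1 hev
  have hconst : ∫⁻ _ in Ioi (max a R), ENNReal.ofReal ε = ∞ := by
    rw [setLIntegral_const, Real.volume_Ioi, ENNReal.mul_top (by simpa using hε)]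
  refine hf.ne (eq_top_mono ?_ hconst)
  calc ∫⁻ _ in Ioi (max a R), ENNReal.ofReal ε
        ≤ ∫⁻ r in Ioi (max a R), ENNReal.ofReal (f r) :=
          setLIntegral_mono' measurableSet_Ioi fun r hr =>
            ENNReal.ofReal_le_ofReal (not_le.1 (hR r (le_max_right a R |>.trans hr.le))).le
      _ ≤ ∫⁻ r in Ioi a, ENNReal.ofReal (f r) :=
        lintegral_mono_set (Ioi_subset_Ioi (le_max_left a R))

theorem ofReal_intervalIntegral_eq_setLIntegral_Ioc {f : ℝ → ℝ} (hf : Continuous f) {a b : ℝ}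
    (hab : a ≤ b) (hf0 : ∀ r ∈ Ioc a b, 0 ≤ f r) :
    ENNReal.ofReal (∫ r in a..b, f r) = ∫⁻ r in Ioc a b, ENNReal.ofReal (f r) := by
  rw [intervalIntegral.integral_of_le hab, ofReal_integral_eq_lintegral_ofReal
    hf.integrableOn_Ioc ((ae_restrict_iff' measurableSet_Ioc).2 (ae_of_all _ hf0))]

section Hardy1D

variable {v v' : ℝ → ℝ}

theorem integral_sq_mul_pow_le (m : ℕ) (hv : ∀ r, HasDerivAt v (v' r) r) (hv' : Continuous v')
    {b : ℝ} (hb : 0 ≤ b) :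
    ∫ r in 0..b, v r ^ 2 * r ^ m ≤
      2 / (m + 1) * (v b ^ 2 * b ^ (m + 1)) +
        4 / (m + 1) ^ 2 * ∫ r in 0..b, v' r ^ 2 * r ^ (m + 2) := by
  have hvc : Continuous v := continuous_iff_continuousAt.2 fun r => (hv r).continuousAt
  have hc : (0 : ℝ) < m + 1 := by positivity
  set ψ : ℝ → ℝ := fun r => 2 * v r * v' r * r ^ (m + 1) + (m + 1) * (v r ^ 2 * r ^ m)
  have hψ : ∀ r, HasDerivAt (fun r => v r ^ 2 * r ^ (m + 1)) (ψ r) r := fun r => by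
    refine (((hv r).fun_pow 2).fun_mul (hasDerivAt_pow (m + 1) r)).congr_deriv ?_
    simp only [ψ]
    push_cast
    ring
  have hFTC : ∫ r in 0..b, ψ r = v b ^ 2 * b ^ (m + 1) := by
    rw [intervalIntegral.integral_eq_sub_of_hasDerivAt (fun r _ => hψ r)
      ((by fun_prop : Continuous ψ).intervalIntegrable _ _)]
    simp
  have hpt : ∀ r ∈ Icc 0 b, v r ^ 2 * r ^ m ≤
      2 / (m + 1) * ψ r + 4 / (m + 1) ^ 2 * (v' r ^ 2 * r ^ (m + 2)) := fun r hr => by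
    have hsq : 2 / (m + 1) * ψ r + 4 / (m + 1) ^ 2 * (v' r ^ 2 * r ^ (m + 2)) - v r ^ 2 * r ^ m
        = r ^ m * (v r + 2 * r * v' r / (m + 1)) ^ 2 := by
      simp only [ψ]
      field_simp
      ring
    have : 0 ≤ r ^ m * (v r + 2 * r * v' r / (m + 1)) ^ 2 := by
      have := hr.1
      positivity
    linarith
  calc ∫ r in 0..b, v r ^ 2 * r ^ m
      ≤ ∫ r in 0..b, (2 / (m + 1) * ψ r + 4 / (m + 1) ^ 2 * (v' r ^ 2 * r ^ (m + 2))) :=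
        intervalIntegral.integral_mono_on hb ((by fun_prop : Continuous _).intervalIntegrable _ _)
          ((by fun_prop : Continuous _).intervalIntegrable _ _) hpt
    _ = _ := by
        rw [intervalIntegral.integral_add ((by fun_prop : Continuous _).intervalIntegrable _ _)
          ((by fun_prop : Continuous _).intervalIntegrable _ _),
          intervalIntegral.integral_const_mul, intervalIntegral.integral_const_mul, hFTC]

theorem lintegral_sq_mul_pow_le (m : ℕ) (hv : ∀ r, HasDerivAt v (v' r) r) (hv' : Continuous v')
    (hfin : ∫⁻ r in Ioi 0, ENNReal.ofReal (v r ^ 2 * r ^ (m + 2)) < ∞) :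
    ∫⁻ r in Ioi 0, ENNReal.ofReal (v r ^ 2 * r ^ m) ≤
      ENNReal.ofReal (4 / (m + 1) ^ 2) *
        ∫⁻ r in Ioi 0, ENNReal.ofReal (v' r ^ 2 * r ^ (m + 2)) := by
  have hvc : Continuous v := continuous_iff_continuousAt.2 fun r => (hv r).continuousAt
  have hc : (0 : ℝ) < m + 1 := by positivity
  have hnn : ∀ (g : ℝ → ℝ) (k : ℕ) (b : ℝ), ∀ r ∈ Ioc 0 b, 0 ≤ g r ^ 2 * r ^ k :=
    fun g k b r hr => by have := hr.1; positivity
  conv_lhs => rw [← iUnion_Ioc_eq_Ioi_self_iff.2 fun x _ => exists_nat_ge x,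
    setLIntegral_iUnion_of_directed _ (Monotone.directed_le fun i j hij =>
      Ioc_subset_Ioc_right (by exact_mod_cast hij))]
  refine iSup_le fun n => ENNReal.le_of_forall_pos_le_add fun ε hε _ => ?_
  obtain ⟨b, hb, hbn⟩ := ((frequently_atTop_le_of_setLIntegral_Ioi_lt_top
    (by positivity : (0 : ℝ) < (m + 1) * ε / 2) hfin).and_eventually
    (eventually_ge_atTop (max (n : ℝ) 1))).exists
  have hb1 : 1 ≤ b := le_of_max_le_right hbn
  have hb0 : 0 ≤ b := zero_le_one.trans hb1
  have hboundary : 2 / (m + 1) * (v b ^ 2 * b ^ (m + 1)) ≤ ε := by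
    have : v b ^ 2 * b ^ (m + 1) ≤ v b ^ 2 * b ^ (m + 2) :=
      mul_le_mul_of_nonneg_left (pow_le_pow_right₀ hb1 (by omega)) (sq_nonneg _)
    rw [div_mul_eq_mul_div, div_le_iff₀ hc]
    linarith
  calc ∫⁻ r in Ioc 0 (n : ℝ), ENNReal.ofReal (v r ^ 2 * r ^ m)
      ≤ ∫⁻ r in Ioc 0 b, ENNReal.ofReal (v r ^ 2 * r ^ m) :=
        lintegral_mono_set (Ioc_subset_Ioc_right (le_of_max_le_left hbn))
    _ = ENNReal.ofReal (∫ r in 0..b, v r ^ 2 * r ^ m) :=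
        (ofReal_intervalIntegral_eq_setLIntegral_Ioc (by fun_prop) hb0 (hnn v m b)).symm
    _ ≤ ENNReal.ofReal (2 / (m + 1) * (v b ^ 2 * b ^ (m + 1))) +
          ENNReal.ofReal (4 / (m + 1) ^ 2) *
            ENNReal.ofReal (∫ r in 0..b, v' r ^ 2 * r ^ (m + 2)) := by
        rw [← ENNReal.ofReal_mul (by positivity)]
        exact (ENNReal.ofReal_le_ofReal (integral_sq_mul_pow_le m hv hv' hb0)).trans
          ENNReal.ofReal_add_le
    _ ≤ ε + ENNReal.ofReal (4 / (m + 1) ^ 2) *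
          ∫⁻ r in Ioi 0, ENNReal.ofReal (v' r ^ 2 * r ^ (m + 2)) := by
        gcongr
        · exact ENNReal.ofReal_le_of_le_toReal hboundary
        · rw [ofReal_intervalIntegral_eq_setLIntegral_Ioc (by fun_prop) hb0 (hnn v' _ b)]
          exact lintegral_mono_set Ioc_subset_Ioi_self
    _ = _ := add_comm _ _

end Hardy1D

theorem lintegral_Ioi_sq_comp_smul_div_sq_le {E : Type*} [NormedAddCommGroup E] [NormedSpace ℝ E]
    {u : E → ℝ} (hu : ContDiff ℝ 1 u) {ω : E} (hω : ‖ω‖ = 1) (m : ℕ)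
    (hfin : ∫⁻ r in Ioi (0 : ℝ),
      ENNReal.ofReal (r ^ (m + 2)) * ENNReal.ofReal (u (r • ω) ^ 2) < ∞) :
    ∫⁻ r in Ioi (0 : ℝ), ENNReal.ofReal (r ^ (m + 2)) * ENNReal.ofReal (u (r • ω) ^ 2 / r ^ 2) ≤
      ENNReal.ofReal (4 / (m + 1) ^ 2) * ∫⁻ r in Ioi (0 : ℝ),
        ENNReal.ofReal (r ^ (m + 2)) * ENNReal.ofReal (‖fderiv ℝ u (r • ω)‖ ^ 2) := by
  set v : ℝ → ℝ := fun r => u (r • ω)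
  set v' : ℝ → ℝ := fun r => fderiv ℝ u (r • ω) ω
  have hv : ∀ r, HasDerivAt v (v' r) r := fun r =>
    (hu.differentiable one_ne_zero _).hasFDerivAt.comp_hasDerivAt r
      (by simpa using (hasDerivAt_id r).smul_const ω)
  have hv' : Continuous v' :=
    ((hu.continuous_fderiv one_ne_zero).comp (by fun_prop)).clm_apply continuous_const
  have hv'le : ∀ r, v' r ^ 2 ≤ ‖fderiv ℝ u (r • ω)‖ ^ 2 := fun r => by
    have := (fderiv ℝ u (r • ω)).le_opNorm ω
    rw [hω, mul_one, Real.norm_eq_abs] at this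
    exact sq_le_sq.2 (by rwa [abs_norm])
  have hweight : ∀ (g : ℝ → ℝ) (k : ℕ),
      ∫⁻ r in Ioi (0 : ℝ), ENNReal.ofReal (r ^ k) * ENNReal.ofReal (g r)
      = ∫⁻ r in Ioi (0 : ℝ), ENNReal.ofReal (g r * r ^ k) :=
    fun g k => setLIntegral_congr_fun measurableSet_Ioi fun r hr => by
      rw [← ENNReal.ofReal_mul (pow_nonneg (le_of_lt hr) k), mul_comm]
  rw [hweight] at hfin
  calc ∫⁻ r in Ioi (0 : ℝ), ENNReal.ofReal (r ^ (m + 2)) * ENNReal.ofReal (u (r • ω) ^ 2 / r ^ 2)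
      = ∫⁻ r in Ioi (0 : ℝ), ENNReal.ofReal (v r ^ 2 * r ^ m) := by
        rw [hweight]
        refine setLIntegral_congr_fun measurableSet_Ioi fun r hr => ?_
        have : r ≠ 0 := ne_of_gt hr
        congr 1
        field_simp
        ring
    _ ≤ ENNReal.ofReal (4 / (m + 1) ^ 2) *
          ∫⁻ r in Ioi (0 : ℝ), ENNReal.ofReal (v' r ^ 2 * r ^ (m + 2)) :=
        lintegral_sq_mul_pow_le m hv hv' hfin
    _ ≤ _ := by
        rw [hweight]
        exact mul_le_mul_right (setLIntegral_mono' measurableSet_Ioi fun r hr =>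
          ENNReal.ofReal_le_ofReal
            (mul_le_mul_of_nonneg_right (hv'le r) (pow_nonneg (le_of_lt hr) _))) _

section AddHaar

variable {E : Type*} [NormedAddCommGroup E] [NormedSpace ℝ E] [FiniteDimensional ℝ E]
  [MeasurableSpace E] [BorelSpace E]

section

variable (μ : Measure E) [μ.IsAddHaarMeasure]

theorem lintegral_eq_lintegral_toSphere_lintegral_Ioi [Nontrivial E] {g : E → ℝ≥0∞}
    (hg : Measurable g) :
    ∫⁻ x, g x ∂μ = ∫⁻ ω : sphere (0 : E) 1, (∫⁻ r in Ioi (0 : ℝ),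
      ENNReal.ofReal (r ^ (Module.finrank ℝ E - 1)) * g (r • (ω : E))) ∂μ.toSphere := by
  have hpolar : Measurable fun p : sphere (0 : E) 1 × Ioi (0 : ℝ) => g ((p.2 : ℝ) • (p.1 : E)) :=
    hg.comp (by fun_prop)
  calc ∫⁻ x, g x ∂μ = ∫⁻ x : ({0}ᶜ : Set E), g x ∂μ.comap Subtype.val := by
        rw [lintegral_subtype_comap (measurableSet_singleton 0).compl, restrict_compl_singleton]
    _ = ∫⁻ p, g ((p.2 : ℝ) • (p.1 : E))
          ∂μ.toSphere.prod (.volumeIoiPow (Module.finrank ℝ E - 1)) := by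
        rw [← (μ.measurePreserving_homeomorphUnitSphereProd).lintegral_comp hpolar]
        refine lintegral_congr fun x => congrArg g ?_
        simp [smul_inv_smul₀ (norm_ne_zero_iff.2 x.2)]
    _ = ∫⁻ ω, ∫⁻ r, g ((r : ℝ) • (ω : E)) ∂.volumeIoiPow (Module.finrank ℝ E - 1) ∂μ.toSphere :=
        lintegral_prod _ hpolar.aemeasurable
    _ = _ := by
        refine lintegral_congr fun ω => ?_
        rw [Measure.volumeIoiPow, lintegral_withDensity_eq_lintegral_mul _ (by fun_prop)
          (show Measurable fun r : Ioi (0 : ℝ) => g ((r : ℝ) • (ω : E)) from hg.comp (by fun_prop)),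
          ← lintegral_subtype_comap measurableSet_Ioi
          (fun r : ℝ => ENNReal.ofReal (r ^ (Module.finrank ℝ E - 1)) * g (r • (ω : E)))]
        rfl

theorem lintegral_sq_div_norm_sq_le (hd : 3 ≤ Module.finrank ℝ E) {u : E → ℝ}
    (hu : ContDiff ℝ 1 u) (hu2 : ∫⁻ x, ENNReal.ofReal (u x ^ 2) ∂μ < ∞) :
    ∫⁻ x, ENNReal.ofReal (u x ^ 2 / ‖x‖ ^ 2) ∂μ ≤
      ENNReal.ofReal (4 / ((Module.finrank ℝ E : ℝ) - 2) ^ 2) *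
        ∫⁻ x, ENNReal.ofReal (‖fderiv ℝ u x‖ ^ 2) ∂μ := by
  obtain ⟨m, hm⟩ := Nat.exists_eq_add_of_le' hd
  have : Nontrivial E := Module.nontrivial_of_finrank_pos (R := ℝ) (by omega)
  have hpow : Module.finrank ℝ E - 1 = m + 2 := by omega
  have hconst : (Module.finrank ℝ E : ℝ) - 2 = m + 1 := by rw [hm]; push_cast; ring
  have hcu := hu.continuous
  have hcdu := hu.continuous_fderiv one_ne_zero
  have hnorm : ∀ (ω : sphere (0 : E) 1) {r : ℝ}, 0 < r → ‖r • (ω : E)‖ = r := fun ω r hr => by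
    rw [norm_smul, norm_eq_of_mem_sphere ω, mul_one, Real.norm_of_nonneg hr.le]
  rw [lintegral_eq_lintegral_toSphere_lintegral_Ioi μ (by fun_prop)] at hu2
  rw [hconst, lintegral_eq_lintegral_toSphere_lintegral_Ioi μ (by fun_prop),
    lintegral_eq_lintegral_toSphere_lintegral_Ioi μ (by fun_prop), hpow,
    ← lintegral_const_mul' _ _ ENNReal.ofReal_ne_top]
  simp only [hpow] at hu2
  have hmeas : Measurable fun ω : sphere (0 : E) 1 => ∫⁻ r in Ioi (0 : ℝ),
      ENNReal.ofReal (r ^ (m + 2)) * ENNReal.ofReal (u (r • (ω : E)) ^ 2) :=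
    Measurable.lintegral_prod_right (by fun_prop)
  refine lintegral_mono_ae ((ae_lt_top hmeas hu2.ne).mono fun ω hω => ?_)
  calc ∫⁻ r in Ioi (0 : ℝ), ENNReal.ofReal (r ^ (m + 2)) *
        ENNReal.ofReal (u (r • (ω : E)) ^ 2 / ‖r • (ω : E)‖ ^ 2)
      = ∫⁻ r in Ioi (0 : ℝ), ENNReal.ofReal (r ^ (m + 2)) *
          ENNReal.ofReal (u (r • (ω : E)) ^ 2 / r ^ 2) :=
        setLIntegral_congr_fun measurableSet_Ioi fun r hr => by rw [hnorm ω hr]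
    _ ≤ _ := lintegral_Ioi_sq_comp_smul_div_sq_le hu (norm_eq_of_mem_sphere ω) m hω

end

variable {μ : Measure E} [μ.IsAddHaarMeasure]

theorem integrable_sq_div_norm_sq (hd : 3 ≤ Module.finrank ℝ E) {u : E → ℝ}
    (hu : ContDiff ℝ 1 u) (hu2 : Integrable (fun x => u x ^ 2) μ)
    (hdu : Integrable (fun x => ‖fderiv ℝ u x‖ ^ 2) μ) :
    Integrable (fun x => u x ^ 2 / ‖x‖ ^ 2) μ := by
  have hcu := hu.continuous
  refine ⟨(by fun_prop : Measurable fun x => u x ^ 2 / ‖x‖ ^ 2).aestronglyMeasurable, ?_⟩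
  rw [hasFiniteIntegral_iff_ofReal (ae_of_all _ fun x => by positivity)]
  exact (lintegral_sq_div_norm_sq_le μ hd hu hu2.lintegral_lt_top).trans_lt
    (ENNReal.mul_lt_top ENNReal.ofReal_lt_top hdu.lintegral_lt_top)

theorem integral_sq_div_norm_sq_le (hd : 3 ≤ Module.finrank ℝ E) {u : E → ℝ}
    (hu : ContDiff ℝ 1 u) (hu2 : Integrable (fun x => u x ^ 2) μ)
    (hdu : Integrable (fun x => ‖fderiv ℝ u x‖ ^ 2) μ) :
    ∫ x, u x ^ 2 / ‖x‖ ^ 2 ∂μ ≤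
      4 / ((Module.finrank ℝ E : ℝ) - 2) ^ 2 * ∫ x, ‖fderiv ℝ u x‖ ^ 2 ∂μ := by
  have hcu := hu.continuous
  have hL := lintegral_sq_div_norm_sq_le μ hd hu hu2.lintegral_lt_top
  rw [← ofReal_integral_eq_lintegral_ofReal hdu (ae_of_all _ fun x => by positivity),
    ← ENNReal.ofReal_mul (by positivity)] at hL
  rw [integral_eq_lintegral_of_nonneg_ae (ae_of_all _ fun x => by positivity)
    (by fun_prop : Measurable fun x => u x ^ 2 / ‖x‖ ^ 2).aestronglyMeasurable]
  exact ENNReal.toReal_le_of_le_ofReal (by positivity) hL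

end AddHaar

theorem norm_gradient_eq_norm_fderiv {F : Type*} [NormedAddCommGroup F] [InnerProductSpace ℝ F]
    [CompleteSpace F] (f : F → ℝ) (x : F) : ‖gradient f x‖ = ‖fderiv ℝ f x‖ :=
  (InnerProductSpace.toDual ℝ F).symm.norm_map _

theorem Admissible.integrable_norm_gradient_sq {N : ℕ} {u : Euc N → ℝ} (hu : Admissible N u) :
    Integrable fun x => ‖gradient u x‖ ^ 2 :=
  (memLp_two_iff_integrable_sq_norm hu.2.2.aestronglyMeasurable).1 hu.2.2

theorem integral_dV_mul_sq_le {N : ℕ} (hN : 3 ≤ N) {V : Euc N → ℝ} {θ : ℝ} (hV4 : V4cond N V θ)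
    {u : Euc N → ℝ} (hu : Admissible N u) (hint : Integrable fun x => dV N V x * u x ^ 2) :
    ∫ x, dV N V x * u x ^ 2 ≤ 2 * θ * gradN2 N u := by
  obtain ⟨-, hθ, -, hbound⟩ := hV4
  have hd : Module.finrank ℝ (Euc N) = N := finrank_euclideanSpace_fin
  have hd3 : 3 ≤ Module.finrank ℝ (Euc N) := by rwa [hd]
  have : Nontrivial (Euc N) := Module.nontrivial_of_finrank_pos (R := ℝ) (by omega)
  have hG : gradN2 N u = ∫ x, ‖fderiv ℝ u x‖ ^ 2 := by
    simp only [gradN2, norm_gradient_eq_norm_fderiv]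
  have hdu : Integrable fun x : Euc N => ‖fderiv ℝ u x‖ ^ 2 := by
    simpa only [norm_gradient_eq_norm_fderiv] using hu.integrable_norm_gradient_sq
  have hu2 := hu.2.1.integrable_sq
  set K := ((N : ℝ) - 2) ^ 2 * θ / 2
  have hpt : ∀ᵐ x : Euc N, dV N V x * u x ^ 2 ≤ K * (u x ^ 2 / ‖x‖ ^ 2) := by
    filter_upwards [compl_mem_ae_iff.2 (measure_singleton 0)] with x hx
    calc dV N V x * u x ^ 2 ≤ ((N : ℝ) - 2) ^ 2 * θ / (2 * ‖x‖ ^ 2) * u x ^ 2 :=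
          mul_le_mul_of_nonneg_right (hbound x hx) (sq_nonneg _)
      _ = K * (u x ^ 2 / ‖x‖ ^ 2) := by ring
  calc ∫ x, dV N V x * u x ^ 2
      ≤ ∫ x, K * (u x ^ 2 / ‖x‖ ^ 2) :=
        integral_mono_ae hint ((integrable_sq_div_norm_sq hd3 hu.1 hu2 hdu).const_mul K) hpt
    _ = K * ∫ x, u x ^ 2 / ‖x‖ ^ 2 := integral_const_mul K _
    _ ≤ K * (4 / ((N : ℝ) - 2) ^ 2 * gradN2 N u) := by
        gcongr
        have hHardy := integral_sq_div_norm_sq_le hd3 hu.1 hu2 hdu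
        rwa [hd, ← hG] at hHardy
    _ = 2 * θ * gradN2 N u := by
        have : (3 : ℝ) ≤ N := by exact_mod_cast hN
        have hc : (N : ℝ) - 2 ≠ 0 := by linarith
        simp only [K]
        field_simp
        ring

theorem IfunL_eq_of_PfunL_eq_zero {N : ℕ} (hN : N ≠ 0) {V : Euc N → ℝ} {f : ℝ → ℝ} {lam : ℝ}
    {u : Euc N → ℝ} (hdu : Integrable fun x => ‖gradient u x‖ ^ 2)
    (hVu : Integrable fun x => V x * u x ^ 2) (hdVu : Integrable fun x => dV N V x * u x ^ 2)
    (hP : PfunL N V f lam u = 0) :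
    IfunL N V f lam u = 1 / N * gradN2 N u - 1 / (2 * N) * ∫ x, dV N V x * u x ^ 2 := by
  have hsplitI : ∫ x, (‖gradient u x‖ ^ 2 + V x * u x ^ 2)
      = gradN2 N u + ∫ x, V x * u x ^ 2 := integral_add hdu hVu
  have hsplitP : ∫ x, ((N : ℝ) * V x + dV N V x) * u x ^ 2
      = N * (∫ x, V x * u x ^ 2) + ∫ x, dV N V x * u x ^ 2 := by
    rw [← integral_const_mul, ← integral_add (hVu.const_mul _) hdVu]
    exact integral_congr_ae (ae_of_all _ fun x => by ring)
  rw [PfunL, hsplitP] at hP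
  rw [IfunL, hsplitI]
  have : (N : ℝ) ≠ 0 := Nat.cast_ne_zero.2 hN
  field_simp
  linear_combination 2 * hP

/-- under (V4), `Ψ(u) = (1/N)‖∇u‖₂² - (1/2N)∫(∇V·x)u²` dominates
`((1-θ)/N)‖∇u‖₂²`; in particular every `u` with `P_λ(u) = 0` satisfies
`I_λ(u) ≥ ((1-θ)/N)‖∇u‖₂² ≥ 0`. -/
theorem stmt_19 (N : ℕ) (hN : 3 ≤ N) (V : Euc N → ℝ) (θ : ℝ)
    (hV4 : V4cond N V θ) :
    (∀ u : Euc N → ℝ, Admissible N u →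
      Integrable (fun x : Euc N => dV N V x * (u x) ^ 2) →
      (1 - θ) / (N : ℝ) * gradN2 N u ≤
        1 / (N : ℝ) * gradN2 N u
          - 1 / (2 * (N : ℝ)) * ∫ x : Euc N, dV N V x * (u x) ^ 2) ∧
    ∀ f : ℝ → ℝ, Continuous f → ∀ lam : ℝ, ∀ u : Euc N → ℝ, Admissible N u →
      Integrable (fun x : Euc N => Fprim f (u x)) →
      Integrable (fun x : Euc N => V x * (u x) ^ 2) →
      Integrable (fun x : Euc N => dV N V x * (u x) ^ 2) →
      PfunL N V f lam u = 0 →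
      (1 - θ) / (N : ℝ) * gradN2 N u ≤ IfunL N V f lam u ∧
        0 ≤ IfunL N V f lam u := by
  have hN0 : (0 : ℝ) < N := by positivity
  have hΨ : ∀ u : Euc N → ℝ, Admissible N u → Integrable (fun x => dV N V x * u x ^ 2) →
      (1 - θ) / N * gradN2 N u ≤ 1 / N * gradN2 N u - 1 / (2 * N) * ∫ x, dV N V x * u x ^ 2 := by
    intro u hu hint
    have hbound := integral_dV_mul_sq_le hN hV4 hu hint
    have hgap : 1 / N * gradN2 N u - 1 / (2 * N) * (∫ x, dV N V x * u x ^ 2)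
        - (1 - θ) / N * gradN2 N u = (2 * θ * gradN2 N u - ∫ x, dV N V x * u x ^ 2) / (2 * N) := by
      field_simp
      ring
    linarith [div_nonneg (sub_nonneg.2 hbound) (by positivity : (0 : ℝ) ≤ 2 * N)]
  refine ⟨hΨ, fun f _ lam u hu _ hVu hdVu hP => ?_⟩
  rw [IfunL_eq_of_PfunL_eq_zero (by omega) hu.integrable_norm_gradient_sq hVu hdVu hP]
  have hG : 0 ≤ gradN2 N u := integral_nonneg fun _ => by positivity
  have hθ : θ < 1 := hV4.2.2.1
  exact ⟨hΨ u hu hdVu,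
    (mul_nonneg (div_nonneg (by linarith) hN0.le) hG).trans (hΨ u hu hdVu)⟩
end
end
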